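/- arXiv:2207.11157 — 2 statements merged into one kernel-verified Lean document; each statement's English description precedes it below -/
import Mathlib

section
/- Fix $n \geq 2$ and let $T_n$ be the real $n \times n$ tridiagonal matrix with diagonal entries $d_i = 1$ for $i = 1, \dots, n$, superdiagonal entries $a_i = i$ for $i = 1, \dots, n-1$, and subdiagonal entries $b_i = n - i$ for $i = 1, \dots, n-1$. Define the sequence $c$ by $c_1 = 1$ and $c_k = 1 - a_{k-1} b_{k-1}/c_{k-1} = 1 - (k-1)(n-k+1)/c_{k-1}$ for $2 \leq k \leq n$. Then for every $k$ with $1 \leq k \leq n$: $c_k = k$ if $k$ is odd, and $c_k = -(n-k)$ if $k$ is even (each such $c_k$ being well-defined whenever $k \leq n-1$, since then $c_{k-1} \neq 0$). -/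
/-- The auxiliary sequence `c 1 = d 1`, `c i = d i - a (i-1) * b (i-1) / c (i-1)`. -/
noncomputable def cseq (d a b : ℕ → ℝ) : ℕ → ℝ
  | 0 => 0
  | 1 => d 1
  | (k + 2) => d (k + 2) - a (k + 1) * b (k + 1) / cseq d a b (k + 1)

/-- For the tridiagonal matrix with `d i = 1`, `a i = i`, `b i = n - i`, the auxiliary
sequence satisfies `c k = k` for odd `k` and `c k = -(n - k)` for even `k`. -/
theorem cseq_example (n : ℕ) (hn : 2 ≤ n) (c : ℕ → ℝ)
    (hc : c = cseq (fun _ => 1) (fun i => (i : ℝ)) (fun i => (n : ℝ) - (i : ℝ))) :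
    ∀ k, 1 ≤ k → k ≤ n →
      (Odd k → c k = (k : ℝ)) ∧ (Even k → c k = -((n : ℝ) - (k : ℝ))) := by
  subst hc
  intro k
  induction k with
  | zero => intro h; omega
  | succ k ih =>
    intro _ hkn
    rcases Nat.eq_zero_or_pos k with rfl | hk
    · refine ⟨fun _ => by simp [cseq], fun h => by simp at h⟩
    have hkn' : k ≤ n := by omega
    obtain ⟨ho, he⟩ := ih hk hkn'
    have hk2 : ∃ m, k = m + 1 := ⟨k - 1, by omega⟩
    obtain ⟨m, rfl⟩ := hk2
    have hrec : cseq (fun _ => 1) (fun i => (i : ℝ)) (fun i => (n : ℝ) - (i : ℝ)) (m + 2)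
        = 1 - ((m + 1 : ℕ) : ℝ) * ((n : ℝ) - ((m + 1 : ℕ) : ℝ)) /
          cseq (fun _ => 1) (fun i => (i : ℝ)) (fun i => (n : ℝ) - (i : ℝ)) (m + 1) := rfl
    rcases Nat.even_or_odd (m + 1) with hev | hod
    · -- k = m+1 even, so c k = -(n-k) ≠ 0 since k < n
      have hck := he hev
      have hlt : m + 1 < n := by
        rcases Nat.lt_or_ge (m + 1) n with h | h
        · exact h
        · exfalso
          have : m + 2 ≤ n := hkn
          omega
      have hne : ((n : ℝ) - ((m + 1 : ℕ) : ℝ)) ≠ 0 := by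
        have : ((m + 1 : ℕ) : ℝ) < (n : ℝ) := by exact_mod_cast hlt
        linarith
      constructor
      · intro _
        rw [hrec, hck, div_neg, mul_div_assoc, div_self hne, mul_one]
        push_cast
        ring
      · intro hcontra
        exfalso
        have : Odd (m + 2) := Even.add_one hev
        exact (Nat.not_even_iff_odd.mpr this) hcontra
    · -- k = m+1 odd, c k = k ≠ 0
      have hck := ho hod
      have hne : ((m + 1 : ℕ) : ℝ) ≠ 0 := by positivity
      constructor
      · intro hcontra
        exfalso
        have : Even (m + 2) := Odd.add_one hod
        exact (Nat.not_odd_iff_even.mpr this) hcontra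
      · intro _
        rw [hrec, hck]
        push_cast
        field_simp
        ring
end

section
/- Fix $n \geq 2$ and let $T_n$ be the real $n \times n$ tridiagonal matrix with diagonal entries $d_i = 1$ for $i = 1, \dots, n$, superdiagonal entries $a_i = i$ for $i = 1, \dots, n-1$, and subdiagonal entries $b_i = n - i$ for $i = 1, \dots, n-1$. Then $\det(T_n) = 0$ if $n$ is even, and $\det(T_n) = \frac{(-1)^{(n-1)/2}\, n!}{2^{n-1}} \binom{n-1}{(n-1)/2}$ if $n$ is odd. -/
open scoped Nat


/-- The `n × n` tridiagonal matrix with (1-indexed) diagonal entries `d 1, …, d n`,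
superdiagonal entries `a 1, …, a (n-1)` and subdiagonal entries `b 1, …, b (n-1)`. -/
def tridiag {R : Type*} [CommRing R] (n : ℕ) (d a b : ℕ → R) :
    Matrix (Fin n) (Fin n) R :=
  Matrix.of fun i j =>
    if (i : ℕ) = (j : ℕ) then d ((i : ℕ) + 1)
    else if (j : ℕ) = (i : ℕ) + 1 then a ((i : ℕ) + 1)
    else if (i : ℕ) = (j : ℕ) + 1 then b ((j : ℕ) + 1)
    else 0


lemma tridiag_apply {R : Type*} [CommRing R] {n : ℕ} (d a b : ℕ → R) (i j : Fin n) :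
    tridiag n d a b i j =
      if (i : ℕ) = (j : ℕ) then d ((i : ℕ) + 1)
      else if (j : ℕ) = (i : ℕ) + 1 then a ((i : ℕ) + 1)
      else if (i : ℕ) = (j : ℕ) + 1 then b ((j : ℕ) + 1)
      else 0 := rfl

lemma coe_succAbove' {n : ℕ} (p : Fin (n+1)) (i : Fin n) :
    ((p.succAbove i : Fin (n+1)) : ℕ) = if (i : ℕ) < (p : ℕ) then (i : ℕ) else (i : ℕ) + 1 := by
  rw [Fin.succAbove]
  split_ifs with h1 h2 h2 <;> simp_all [Fin.lt_def]

lemma tridiag_submatrix {R : Type*} [CommRing R] {n m : ℕ} (d a b : ℕ → R)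
    (f g : Fin m → Fin n) (hf : ∀ i, ((f i : Fin n) : ℕ) = i) (hg : ∀ j, ((g j : Fin n) : ℕ) = j) :
    (tridiag n d a b).submatrix f g = tridiag m d a b := by
  ext i j
  rw [Matrix.submatrix_apply, tridiag_apply, tridiag_apply, hf, hg]

lemma tridiag_det_rec {R : Type*} [CommRing R] (d a b : ℕ → R) (k : ℕ) :
    (tridiag (k+2) d a b).det =
      d (k+2) * (tridiag (k+1) d a b).det
        - a (k+1) * b (k+1) * (tridiag k d a b).det := by
  set A := tridiag (k+2) d a b with hA
  rw [Matrix.det_succ_column A (Fin.last (k+1)), Fin.sum_univ_castSucc, Fin.sum_univ_castSucc]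
  have hz : ∀ i : Fin k, A i.castSucc.castSucc (Fin.last (k+1)) = 0 := by
    intro i
    have hi : (i : ℕ) < k := i.isLt
    rw [hA, tridiag_apply]
    simp only [Fin.coe_castSucc, Fin.val_last]
    rw [if_neg (by omega), if_neg (by omega), if_neg (by omega)]
  rw [Finset.sum_eq_zero (fun i _ => by rw [hz i, mul_zero, zero_mul]), zero_add]
  -- the two surviving terms
  have hlastlast : A (Fin.last (k+1)) (Fin.last (k+1)) = d (k+2) := by
    rw [hA, tridiag_apply]; simp
  have hsublast : A ((Fin.last k).castSucc) (Fin.last (k+1)) = a (k+1) := by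
    rw [hA, tridiag_apply]
    simp only [Fin.coe_castSucc, Fin.val_last]
    rw [if_neg (by omega)]
    simp
  -- minor at (last, last)
  have hminor1 : A.submatrix (Fin.last (k+1)).succAbove (Fin.last (k+1)).succAbove
      = tridiag (k+1) d a b := by
    rw [hA]
    exact tridiag_submatrix d a b _ _
      (fun i => by rw [Fin.succAbove_last]; simp)
      (fun j => by rw [Fin.succAbove_last]; simp)
  -- minor N at (castSucc last, last)
  set N := A.submatrix ((Fin.last k).castSucc : Fin (k+2)).succAbove (Fin.last (k+1)).succAbove
    with hN
  have hdetN : N.det = b (k+1) * (tridiag k d a b).det := by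
    rw [Matrix.det_succ_row N (Fin.last k), Fin.sum_univ_castSucc]
    have hz2 : ∀ j : Fin k, N (Fin.last k) j.castSucc = 0 := by
      intro j
      have hj : (j : ℕ) < k := j.isLt
      have hrow : ((((Fin.last k).castSucc : Fin (k+2)).succAbove (Fin.last k)) : ℕ) = k+1 := by
        rw [coe_succAbove']; simp
      have hcol : (((Fin.last (k+1)).succAbove j.castSucc) : ℕ) = (j : ℕ) := by
        rw [Fin.succAbove_last]; simp
      rw [hN, Matrix.submatrix_apply, hA, tridiag_apply, hrow, hcol]
      rw [if_neg (by omega), if_neg (by omega), if_neg (by omega)]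
    rw [Finset.sum_eq_zero (fun j _ => by rw [hz2 j, mul_zero, zero_mul]), zero_add]
    have hentry : N (Fin.last k) (Fin.last k) = b (k+1) := by
      have hrow : ((((Fin.last k).castSucc : Fin (k+2)).succAbove (Fin.last k)) : ℕ) = k+1 := by
        rw [coe_succAbove']; simp
      have hcol : (((Fin.last (k+1)).succAbove (Fin.last k)) : ℕ) = k := by
        rw [Fin.succAbove_last]; simp
      rw [hN, Matrix.submatrix_apply, hA, tridiag_apply, hrow, hcol]
      rw [if_neg (by omega), if_neg (by omega), if_pos rfl]
    have hminor2 : N.submatrix (Fin.last k).succAbove (Fin.last k).succAbove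
        = tridiag k d a b := by
      rw [hN, Matrix.submatrix_submatrix, hA]
      refine tridiag_submatrix d a b _ _ (fun i => ?_) (fun j => ?_)
      · show ((((Fin.last k).castSucc : Fin (k+2)).succAbove ((Fin.last k).succAbove i)) : ℕ) = i
        have hi : (i : ℕ) < k := i.isLt
        rw [Fin.succAbove_last]
        rw [coe_succAbove']
        simp only [Fin.coe_castSucc, Fin.val_last]
        rw [if_pos (by omega)]
      · show (((Fin.last (k+1)).succAbove ((Fin.last k).succAbove j)) : ℕ) = j
        rw [Fin.succAbove_last, Fin.succAbove_last]; simp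
    rw [hentry, hminor2]
    simp only [Fin.val_last]
    have : (-1 : R) ^ (k + k) = 1 := by
      rw [← two_mul]; exact Even.neg_one_pow ⟨k, two_mul k ▸ rfl⟩
    rw [this]; ring
  rw [hlastlast, hsublast, hminor1, hdetN]
  simp only [Fin.val_last, Fin.coe_castSucc]
  have h1 : (-1 : R) ^ ((k+1) + (k+1)) = 1 := Even.neg_one_pow ⟨k+1, rfl⟩
  have h2 : (-1 : R) ^ (k + (k+1)) = -1 := Odd.neg_one_pow ⟨k, by ring⟩
  rw [h1, h2]; ring

/-- Продукт `∏_{j<m} (2(j+1) - N)`. -/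
noncomputable def Eprod (N m : ℕ) : ℝ :=
  ∏ j ∈ Finset.range m, (2 * ((j : ℝ) + 1) - (N : ℝ))

lemma key (N : ℕ) : ∀ m : ℕ,
    (tridiag (2*m) (fun _ => (1 : ℝ)) (fun i => (i : ℝ)) (fun i => (N : ℝ) - (i : ℝ))).det
      = ((2*m-1)‼ : ℕ) * Eprod N m ∧
    (tridiag (2*m+1) (fun _ => (1 : ℝ)) (fun i => (i : ℝ)) (fun i => (N : ℝ) - (i : ℝ))).det
      = ((2*m+1)‼ : ℕ) * Eprod N m := by
  intro m
  induction m with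
  | zero =>
      constructor
      · show (tridiag 0 _ _ _).det = _
        rw [Matrix.det_fin_zero]
        simp [Eprod]
      · show (tridiag 1 _ _ _).det = _
        rw [Matrix.det_fin_one, tridiag_apply]
        simp [Eprod, Nat.doubleFactorial]
  | succ m ih =>
      obtain ⟨ih1, ih2⟩ := ih
      have e1 : 2*(m+1) = (2*m) + 2 := by ring
      have e2 : 2*(m+1)+1 = (2*m+1) + 2 := by ring
      have hd1 : (2*(m+1)-1)‼ = (2*m+1)‼ := by rw [show 2*(m+1)-1 = 2*m+1 from by omega]
      have hd2 : (2*m+1)‼ = (2*m+1) * (2*m-1)‼ := by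
        exact Nat.doubleFactorial_add_one (2*m)
      have hd3 : (2*(m+1)+1)‼ = (2*m+3) * (2*m+1)‼ := by
        have := Nat.doubleFactorial_add_two (2*m+1)
        rw [show 2*(m+1)+1 = 2*m+1+2 by ring, this]
      have hE : Eprod N (m+1) = Eprod N m * (2 * ((m : ℝ) + 1) - (N : ℝ)) := by
        rw [Eprod, Finset.prod_range_succ]; rfl
      have first : (tridiag (2*(m+1)) (fun _ => (1 : ℝ)) (fun i => (i : ℝ))
          (fun i => (N : ℝ) - (i : ℝ))).det = ((2*(m+1)-1)‼ : ℕ) * Eprod N (m+1) := by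
        rw [hd1, e1, tridiag_det_rec, ih1, ih2, hE, hd2]
        push_cast
        ring
      refine ⟨first, ?_⟩
      have e3 : 2*m+1+1 = 2*(m+1) := by ring
      rw [hd3, e2, tridiag_det_rec, ih2, e3, first, hd1, hE, hd2]
      push_cast
      ring

example : True := trivial

lemma Eprod_odd (m : ℕ) : Eprod (2*m+1) m = (-1)^m * ((2*m-1)‼ : ℕ) := by
  have step1 : Eprod (2*m+1) m
      = ∏ j ∈ Finset.range m, ((-1 : ℝ) * (2 * (((m-1-j : ℕ)) : ℝ) + 1)) := by
    refine Finset.prod_congr rfl fun j hj => ?_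
    have hj' : j < m := Finset.mem_range.mp hj
    obtain ⟨t, ht2⟩ : ∃ t, m - 1 - j = t := ⟨_, rfl⟩
    rw [ht2]
    have ht : m = j + t + 1 := by omega
    subst ht
    push_cast
    ring
  rw [step1, Finset.prod_mul_distrib, Finset.prod_const, Finset.card_range]
  congr 1
  have step2 : ∏ j ∈ Finset.range m, (2 * (((m-1-j : ℕ)) : ℝ) + 1)
      = ∏ j ∈ Finset.range m, (2 * (j : ℝ) + 1) :=
    Finset.prod_range_reflect (fun j => 2 * (j : ℝ) + 1) m
  rw [step2]
  have step3 : (((2*m-1)‼ : ℕ) : ℝ) = ((∏ j ∈ Finset.range m, (2*j+1) : ℕ) : ℝ) := by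
    congr 1
    cases m with
    | zero => simp
    | succ t =>
        rw [show 2*(t+1)-1 = 2*t+1 from by omega, Finset.prod_range_succ',
          ← Nat.doubleFactorial_eq_prod_odd t]
        simp
  rw [step3]
  push_cast
  rfl

lemma natid (m : ℕ) : (2*m+1)‼ * (2*m-1)‼ * 2^(2*m) = (2*m+1)! * Nat.choose (2*m) m := by
  have e1 : (2*m)! = 2^m * m ! * (2*m-1)‼ := by
    cases m with
    | zero => simp
    | succ t =>
        rw [show 2*(t+1) = (2*t+1)+1 from by omega, Nat.factorial_eq_mul_doubleFactorial,
          show (2*t+1)+1-1 = 2*t+1 from by omega,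
          show (2*t+1)+1 = 2*(t+1) from by omega, Nat.doubleFactorial_two_mul]
  have e2 : Nat.choose (2*m) m * m ! * m ! = (2*m)! := by
    have := Nat.choose_mul_factorial_mul_factorial (show m ≤ 2*m by omega)
    rw [show 2*m - m = m from by omega] at this
    exact this
  have e3 : (2*m+1)! = (2*m+1)‼ * (2*m)‼ := Nat.factorial_eq_mul_doubleFactorial (2*m)
  have hpos : 0 < m ! * m ! := Nat.mul_pos m.factorial_pos m.factorial_pos
  apply Nat.eq_of_mul_eq_mul_right hpos
  calc (2*m+1)‼ * (2*m-1)‼ * 2^(2*m) * (m ! * m !)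
      = (2*m+1)‼ * ((2^m * m !) * (2*m-1)‼) * (2^m * m !) := by ring
    _ = (2*m+1)‼ * (2*m)! * (2^m * m !) := by rw [e1]
    _ = (2*m+1)‼ * (2*m)‼ * (2*m)! := by rw [Nat.doubleFactorial_two_mul]; ring
    _ = (2*m+1)! * (Nat.choose (2*m) m * m ! * m !) := by rw [e3, e2]
    _ = (2*m+1)! * Nat.choose (2*m) m * (m ! * m !) := by ring

/-- For the tridiagonal matrix with `d i = 1`, `a i = i`, `b i = n - i`, the determinant
is `0` when `n` is even and `(-1)^((n-1)/2) * n! / 2^(n-1) * C(n-1, (n-1)/2)` when `n`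
is odd. -/
theorem det_tridiag_example (n : ℕ) (hn : 2 ≤ n) :
    (Even n →
      (tridiag n (fun _ => (1 : ℝ)) (fun i => (i : ℝ))
        (fun i => (n : ℝ) - (i : ℝ))).det = 0) ∧
    (Odd n →
      (tridiag n (fun _ => (1 : ℝ)) (fun i => (i : ℝ))
        (fun i => (n : ℝ) - (i : ℝ))).det =
        (-1 : ℝ) ^ ((n - 1) / 2) * (Nat.factorial n : ℝ) / 2 ^ (n - 1) *
          (Nat.choose (n - 1) ((n - 1) / 2) : ℝ)) := by
  constructor
  · rintro ⟨m, hm⟩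
    have hm2 : n = 2*m := by omega
    subst hm2
    have hm1 : 1 ≤ m := by omega
    rw [(key (2*m) m).1]
    have : Eprod (2*m) m = 0 := by
      apply Finset.prod_eq_zero (Finset.mem_range.mpr (show m-1 < m by omega))
      rw [Nat.cast_sub hm1]
      push_cast
      ring
    rw [this, mul_zero]
  · rintro ⟨m, hm⟩
    have hm2 : n = 2*m+1 := by omega
    subst hm2
    rw [(key (2*m+1) m).2, Eprod_odd]
    rw [show 2*m+1-1 = 2*m from by omega, show (2*m)/2 = m from by omega]
    have hid := natid m
    have hr := congrArg (fun x : ℕ => (x : ℝ)) hid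
    push_cast at hr
    have h2 : (2:ℝ)^(2*m) ≠ 0 := by positivity
    rw [div_mul_eq_mul_div, eq_div_iff h2]
    linear_combination ((-1:ℝ))^m * hr
end
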